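/- Every L_j partial tour subgraph belongs to one of the seven equivalence classes UU1C, 0E1C, E01C, EE1C, EE2C, 000C, 001C (i.e., the triple consisting of the degree parities of a_j and b_j and the number of nonempty connected components is one of these seven combinations). Moreover, an L_j PTS of class 000C exists only if no pick vertex of P lies in L_j, and an L_j PTS of class 001C exists only if no pick vertex of P lies in G − L_j. -/

import Mathlib

/-- Degree parity class of a vertex: degree zero, odd degree, or even positive degree. -/
inductive DegClass : Type
  | zero : DegClass
  | odd : DegClass
  | evenPos : DegClass
deriving DecidableEq

/-- The parity class of a natural number (a degree). -/
def degClass (d : ℕ) : DegClass :=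
  if d = 0 then .zero else if d % 2 = 1 then .odd else .evenPos

/-- Names of the six vertical edge configurations. -/
inductive VCName : Type
  | onepass : VCName
  | top : VCName
  | bottom : VCName
  | gap : VCName
  | twopass : VCName
  | none : VCName
deriving DecidableEq

/-- Names of the five horizontal edge configurations. -/
inductive HCName : Type
  | h11 : HCName
  | h20 : HCName
  | h02 : HCName
  | h22 : HCName
  | h00 : HCName
deriving DecidableEq

/-- Number of copies of the back cross-aisle edge `a_j a_{j+1}` in a horizontal configuration. -/
def hcA : HCName → ℕ
  | .h11 => 1
  | .h20 => 2
  | .h02 => 0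
  | .h22 => 2
  | .h00 => 0

/-- Number of copies of the front cross-aisle edge `b_j b_{j+1}` in a horizontal configuration. -/
def hcB : HCName → ℕ
  | .h11 => 1
  | .h20 => 0
  | .h02 => 2
  | .h22 => 2
  | .h00 => 0

/-- The seven equivalence classes, as triples (parity of `a_j`, parity of `b_j`, #components). -/
def cUU1C : DegClass × DegClass × ℕ := (.odd, .odd, 1)
def c0E1C : DegClass × DegClass × ℕ := (.zero, .evenPos, 1)
def cE01C : DegClass × DegClass × ℕ := (.evenPos, .zero, 1)
def cEE1C : DegClass × DegClass × ℕ := (.evenPos, .evenPos, 1)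
def cEE2C : DegClass × DegClass × ℕ := (.evenPos, .evenPos, 2)
def c000C : DegClass × DegClass × ℕ := (.zero, .zero, 0)
def c001C : DegClass × DegClass × ℕ := (.zero, .zero, 1)

/-- A single-block parallel-aisle warehouse in the sense of Ratliff and Rosenthal:
`n ≥ 1` vertical pick aisles, two horizontal cross-aisles, `picks j` pick vertices
strictly inside aisle `j`, nonnegative edge lengths, and a depot located at some
cross-aisle vertex `a_j` (if `depotTop`) or `b_j`. -/
structure Warehouse where
  n : ℕ
  npos : 1 ≤ n
  picks : Fin n → ℕ
  vlen : (j : Fin n) → Fin (picks j + 1) → ℝ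
  hlenA : Fin (n - 1) → ℝ
  hlenB : Fin (n - 1) → ℝ
  vlen_nonneg : ∀ j i, 0 ≤ vlen j i
  hlenA_nonneg : ∀ k, 0 ≤ hlenA k
  hlenB_nonneg : ∀ k, 0 ≤ hlenB k
  depotAisle : Fin n
  depotTop : Bool

namespace Warehouse

variable (W : Warehouse)

/-- Vertices of the warehouse graph: in aisle `j`, position `0` is the back cross-aisle
vertex `a_j`, position `picks j + 1` is the front cross-aisle vertex `b_j`, and
positions `1, …, picks j` are the pick vertices of aisle `j`. -/
def V : Type := Σ j : Fin W.n, Fin (W.picks j + 2)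

instance : DecidableEq W.V :=
  inferInstanceAs (DecidableEq (Σ j : Fin W.n, Fin (W.picks j + 2)))

instance : Fintype W.V :=
  inferInstanceAs (Fintype (Σ j : Fin W.n, Fin (W.picks j + 2)))

/-- The back cross-aisle vertex `a_j`. -/
def aV (j : Fin W.n) : W.V := ⟨j, 0⟩

/-- The front cross-aisle vertex `b_j`. -/
def bV (j : Fin W.n) : W.V := ⟨j, Fin.last (W.picks j + 1)⟩

/-- The depot vertex `v₀`. -/
def depot : W.V := if W.depotTop then W.aV W.depotAisle else W.bV W.depotAisle

/-- `v` is a pick vertex, i.e. a vertex strictly inside an aisle. -/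
def IsPick (v : W.V) : Prop := 0 < v.2.val ∧ v.2.val < W.picks v.1 + 1

/-- `v` is a required vertex, i.e. a member of `P` (a pick vertex or the depot). -/
def Required (v : W.V) : Prop := W.IsPick v ∨ v = W.depot

/-- Edges of the warehouse graph: a vertical edge `⟨j, i⟩` joins positions `i` and
`i+1` of aisle `j`; horizontal edges `inr (inl k)` join `a_k a_{k+1}` and
`inr (inr k)` join `b_k b_{k+1}`. -/
def E : Type := (Σ j : Fin W.n, Fin (W.picks j + 1)) ⊕ (Fin (W.n - 1) ⊕ Fin (W.n - 1))

instance : DecidableEq W.E :=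
  inferInstanceAs (DecidableEq ((Σ j : Fin W.n, Fin (W.picks j + 1)) ⊕ (Fin (W.n - 1) ⊕ Fin (W.n - 1))))

instance : Fintype W.E :=
  inferInstanceAs (Fintype ((Σ j : Fin W.n, Fin (W.picks j + 1)) ⊕ (Fin (W.n - 1) ⊕ Fin (W.n - 1))))

/-- The left aisle of a horizontal edge index. -/
def leftAisle (k : Fin (W.n - 1)) : Fin W.n := ⟨k.val, by have := k.isLt; omega⟩

/-- The right aisle of a horizontal edge index. -/
def rightAisle (k : Fin (W.n - 1)) : Fin W.n := ⟨k.val + 1, by have := k.isLt; omega⟩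

/-- Endpoints of an edge. -/
def ends : W.E → W.V × W.V
  | .inl ⟨j, i⟩ => (⟨j, i.castSucc⟩, ⟨j, i.succ⟩)
  | .inr (.inl k) => (W.aV (W.leftAisle k), W.aV (W.rightAisle k))
  | .inr (.inr k) => (W.bV (W.leftAisle k), W.bV (W.rightAisle k))

/-- Length of an edge. -/
def elen : W.E → ℝ
  | .inl ⟨j, i⟩ => W.vlen j i
  | .inr (.inl k) => W.hlenA k
  | .inr (.inr k) => W.hlenB k

/-- A subgraph of `G` is a multiplicity function taking each edge with multiplicity at most 2. -/
def IsSub (T : W.E → ℕ) : Prop := ∀ e, T e ≤ 2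

/-- Degree of a vertex in a subgraph, counting edges with multiplicity. -/
def deg (T : W.E → ℕ) (v : W.V) : ℕ :=
  ∑ e : W.E, T e * ((if (W.ends e).1 = v then 1 else 0) + (if (W.ends e).2 = v then 1 else 0))

/-- Total length of a subgraph, counting edges with multiplicity. -/
def length (T : W.E → ℕ) : ℝ := ∑ e : W.E, (T e : ℝ) * W.elen e

/-- Source of a directed traversal step. -/
def stepSrc (s : W.E × Bool) : W.V := if s.2 then (W.ends s.1).1 else (W.ends s.1).2

/-- Destination of a directed traversal step. -/
def stepDst (s : W.E × Bool) : W.V := if s.2 then (W.ends s.1).2 else (W.ends s.1).1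

/-- A list of directed steps is a closed walk. -/
def IsClosedWalk (l : List (W.E × Bool)) : Prop :=
  l.Chain' (fun s t => W.stepDst s = W.stepSrc t) ∧
  ∀ s ∈ l.head?, ∀ t ∈ l.getLast?, W.stepDst t = W.stepSrc s

/-- `T` is a tour subgraph: every required vertex has positive degree and there is a
closed walk traversing every edge of `T`, counted with multiplicity, exactly once. -/
def IsTour (T : W.E → ℕ) : Prop :=
  W.IsSub T ∧ (∀ v, W.Required v → 0 < W.deg T v) ∧
  ∃ l : List (W.E × Bool), W.IsClosedWalk l ∧ ∀ e : W.E, (l.map Prod.fst).count e = T e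

/-- `T` is an `L` partial tour subgraph: `T` is a subgraph supported on `L` and there is a
subgraph `C` of `G − L` such that `T ∪ C` is a tour subgraph of `G`. -/
def IsPTS (L : Set W.E) (T : W.E → ℕ) : Prop :=
  W.IsSub T ∧ (∀ e ∉ L, T e = 0) ∧
  ∃ C : W.E → ℕ, W.IsSub C ∧ (∀ e ∈ L, C e = 0) ∧ W.IsTour (fun e => T e + C e)

/-- Two `L` PTSs are equivalent: any completion of one is a completion of the other. -/
def EquivPTS (L : Set W.E) (T₁ T₂ : W.E → ℕ) : Prop :=
  ∀ C : W.E → ℕ, W.IsSub C → (∀ e ∈ L, C e = 0) →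
    (W.IsTour (fun e => T₁ e + C e) ↔ W.IsTour (fun e => T₂ e + C e))

/-- The edge set containing the vertical edges of the (0-indexed) aisles `< vmax` and the
horizontal edges with (0-indexed) index `< hmax`.  Thus, in paper (1-indexed) notation,
`L_j = edgesUpTo j (j-1)`, `L_j^- = edgesUpTo (j-1) (j-1)` and `G = edgesUpTo n (n-1)`. -/
def edgesUpTo (vmax hmax : ℕ) : Set W.E := fun e =>
  match e with
  | .inl ⟨i, _⟩ => i.val < vmax
  | .inr (.inl k) => k.val < hmax
  | .inr (.inr k) => k.val < hmax

/-- The simple graph on the vertices of `G` induced by the edges of positive multiplicity. -/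
def sgraph (T : W.E → ℕ) : SimpleGraph W.V where
  Adj v w := v ≠ w ∧ ∃ e, 0 < T e ∧
    (((W.ends e).1 = v ∧ (W.ends e).2 = w) ∨ ((W.ends e).1 = w ∧ (W.ends e).2 = v))
  symm := by
    constructor
    intro v w hvw
    obtain ⟨hne, e, he, hor⟩ := hvw
    exact ⟨hne.symm, e, he, hor.symm⟩
  loopless := by constructor; intro v h; exact h.1 rfl

/-- Number of connected components of a subgraph after deleting all vertices of degree zero. -/
noncomputable def numComp (T : W.E → ℕ) : ℕ :=
  Nat.card ((W.sgraph T).induce {v : W.V | 0 < W.deg T v}).ConnectedComponent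

/-- `v` and `w` both have positive degree but lie in different connected components of `T`. -/
def SepComp (T : W.E → ℕ) (v w : W.V) : Prop :=
  0 < W.deg T v ∧ 0 < W.deg T w ∧ ¬ (W.sgraph T).Reachable v w

/-- The equivalence class of a subgraph relative to the cross-aisle vertices of aisle `j`:
the degree parities of `a_j` and `b_j` and the number of nonempty connected components. -/
noncomputable def classOf (T : W.E → ℕ) (j : Fin W.n) : DegClass × DegClass × ℕ :=
  (degClass (W.deg T (W.aV j)), degClass (W.deg T (W.bV j)), W.numComp T)

theorem exists_gapIdx (j : Fin W.n) :
    ∃ g : Fin (W.picks j + 1), ∀ i, W.vlen j i ≤ W.vlen j g := by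
  obtain ⟨g, -, hg⟩ :=
    Finset.exists_max_image (Finset.univ : Finset (Fin (W.picks j + 1))) (W.vlen j)
      ⟨0, Finset.mem_univ 0⟩
  exact ⟨g, fun i => hg i (Finset.mem_univ i)⟩

/-- The vertical edge of aisle `j` of maximum length: the edge omitted by the `gap`
configuration (which leaves the largest section of the aisle unconnected). -/
noncomputable def gapIdx (j : Fin W.n) : Fin (W.picks j + 1) := (W.exists_gapIdx j).choose

theorem gapIdx_spec (j : Fin W.n) : ∀ i, W.vlen j i ≤ W.vlen j (W.gapIdx j) :=
  (W.exists_gapIdx j).choose_spec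

/-- The multiplicity of the `i`-th vertical edge of aisle `j` in each of the six vertical
edge configurations. -/
noncomputable def vconfFun (j : Fin W.n) (c : VCName) (i : Fin (W.picks j + 1)) : ℕ :=
  match c with
  | .onepass => 1
  | .top => if i.val < W.picks j then 2 else 0
  | .bottom => if 1 ≤ i.val then 2 else 0
  | .gap => if i = W.gapIdx j then 0 else 2
  | .twopass => 2
  | .none => 0

/-- A vertical edge configuration in aisle `j`, as a subgraph of `G`. -/
noncomputable def vcSub (j : Fin W.n) (c : VCName) : W.E → ℕ := fun e =>
  match e with
  | .inl ⟨i, x⟩ =>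
      if h : i = j then W.vconfFun j c ⟨x.val, by exact h ▸ x.isLt⟩ else 0
  | .inr _ => 0

/-- A horizontal edge configuration between aisles `k` and `k+1`, as a subgraph of `G`. -/
def hcSub (k : Fin (W.n - 1)) (c : HCName) : W.E → ℕ := fun e =>
  match e with
  | .inl _ => 0
  | .inr (.inl k') => if k' = k then hcA c else 0
  | .inr (.inr k') => if k' = k then hcB c else 0

end Warehouse

/-!
Let `C` complete `T` to a tour `H = T + C`. The Eulerian closed walk of `H` makes every
`H`-degree even and the support of `H` connected. Since `T` lives on `L_j` and `C` off it,
the two share no vertex other than `a_j` and `b_j`, so every other vertex has even `T`-degree.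
Handshaking then forces `deg a_j + deg b_j` to be even, and, applied to the `T`-component of
`a_j`, shows that an odd `a_j` lies in the component of `b_j`. A `T`-component avoiding both
`a_j` and `b_j` cannot meet `C`, so by connectivity of `H` it is all of `H`: then `C = 0` and
class `001C` occurs, with every pick vertex in `L_j`. Otherwise each component contains `a_j`
or `b_j`, which leaves the six remaining classes. Finally, if `T` is empty, a pick vertex of
`L_j` could be reached by neither `T` nor `C`.
-/

namespace Warehouse

variable {W : Warehouse} {T C : W.E → ℕ} {v w : W.V}

section Degree

lemma ends_fst_ne_snd (e : W.E) : (W.ends e).1 ≠ (W.ends e).2 := by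
  rcases e with ⟨j, i⟩ | (k | k) <;> intro h
  · have := congrArg (fun v : W.V => (v.2 : ℕ)) h
    simp [ends] at this
  all_goals
    have := congrArg (fun v : W.V => (v.1 : ℕ)) h
    simp [ends, aV, bV, leftAisle, rightAisle] at this

lemma deg_add (T C : W.E → ℕ) (v : W.V) : W.deg (T + C) v = W.deg T v + W.deg C v := by
  simp only [deg, Pi.add_apply, add_mul, Finset.sum_add_distrib]

lemma deg_pos_iff :
    0 < W.deg T v ↔ ∃ e, 0 < T e ∧ ((W.ends e).1 = v ∨ (W.ends e).2 = v) := by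
  simp only [deg, Finset.sum_pos_iff, Finset.mem_univ, true_and, CanonicallyOrderedAdd.mul_pos]
  refine exists_congr fun e => and_congr_right fun _ => ?_
  split_ifs <;> simp_all

lemma sgraph_adj_of_pos {e : W.E} (he : 0 < T e) :
    (W.sgraph T).Adj (W.ends e).1 (W.ends e).2 :=
  ⟨ends_fst_ne_snd e, e, he, Or.inl ⟨rfl, rfl⟩⟩

lemma deg_pos_of_adj (h : (W.sgraph T).Adj v w) : 0 < W.deg T v := by
  obtain ⟨-, e, he, h | h⟩ := h
  exacts [deg_pos_iff.2 ⟨e, he, Or.inl h.1⟩, deg_pos_iff.2 ⟨e, he, Or.inr h.2⟩]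

lemma deg_pos_of_reachable (hv : 0 < W.deg T v) (h : (W.sgraph T).Reachable v w) :
    0 < W.deg T w := by
  obtain ⟨p⟩ := h.symm
  cases p with
  | nil => exact hv
  | cons h _ => exact deg_pos_of_adj h

lemma even_sum_deg_of_closed (S : Finset W.V)
    (hS : ∀ e, 0 < T e → ((W.ends e).1 ∈ S ↔ (W.ends e).2 ∈ S)) :
    Even (∑ v ∈ S, W.deg T v) := by
  unfold deg
  rw [Finset.sum_comm]
  refine Finset.even_sum _ fun e _ => ?_
  rw [← Finset.mul_sum, Finset.sum_add_distrib, Finset.sum_ite_eq S (W.ends e).1,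
    Finset.sum_ite_eq S (W.ends e).2]
  rcases Nat.eq_zero_or_pos (T e) with he | he
  · simp [he]
  · by_cases h : (W.ends e).1 ∈ S
    · simp only [h, (hS e he).1 h, if_true]
      exact ⟨T e, by ring⟩
    · simp [h, mt (hS e he).2 h]

end Degree

section Tour

lemma map_stepDst_cons : ∀ (a : W.E × Bool) (t : List (W.E × Bool)),
    (a :: t).IsChain (fun s u => W.stepDst s = W.stepSrc u) →
    (a :: t).map W.stepDst =
      t.map W.stepSrc ++ [W.stepDst ((a :: t).getLast (List.cons_ne_nil a t))]
  | _, [], _ => rfl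
  | a, b :: t, h => by
    rw [List.isChain_cons_cons] at h
    rw [List.map_cons, map_stepDst_cons b t h.2, h.1, List.getLast_cons_cons]
    rfl

lemma IsClosedWalk.map_stepDst {l : List (W.E × Bool)} (hl : W.IsClosedWalk l) :
    l.map W.stepDst = (l.map W.stepSrc).rotate 1 := by
  cases l with
  | nil => rfl
  | cons a t =>
    rw [map_stepDst_cons a t hl.1, hl.2 a rfl _ (List.getLast?_eq_some_getLast _)]
    simp

lemma deg_eq_sum_steps {H : W.E → ℕ} {l : List (W.E × Bool)}
    (hcount : ∀ e, (l.map Prod.fst).count e = H e) (v : W.V) :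
    W.deg H v = (l.map fun s => if W.stepSrc s = v then 1 else 0).sum +
      (l.map fun s => if W.stepDst s = v then 1 else 0).sum := by
  rw [← List.sum_map_add]
  have hsteps := Finset.sum_list_map_count (l.map Prod.fst)
    (fun e => (if (W.ends e).1 = v then 1 else 0) + (if (W.ends e).2 = v then 1 else 0))
  rw [List.map_map, Finset.sum_subset (Finset.subset_univ _) (fun e _ he => by
    rw [List.count_eq_zero_of_not_mem fun h => he (List.mem_toFinset.2 h), zero_smul])] at hsteps
  simp only [smul_eq_mul, hcount] at hsteps
  rw [deg, ← hsteps]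
  congr 1
  refine List.map_congr_left fun ⟨e, b⟩ _ => ?_
  cases b <;> simp [stepSrc, stepDst, add_comm]

lemma IsTour.even_deg {H : W.E → ℕ} (hH : W.IsTour H) (v : W.V) : Even (W.deg H v) := by
  obtain ⟨-, -, l, hl, hcount⟩ := hH
  have hdst : (l.map fun s => if W.stepDst s = v then 1 else 0).sum =
      (l.map fun s => if W.stepSrc s = v then 1 else 0).sum := by
    rw [← Function.comp_def (fun u => if u = v then 1 else 0), ← List.map_map, hl.map_stepDst,
      ((List.rotate_perm _ 1).map _).sum_eq, List.map_map]
    rfl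
  rw [deg_eq_sum_steps hcount, hdst]
  exact ⟨_, rfl⟩

lemma IsTour.reachable {H : W.E → ℕ} (hH : W.IsTour H) (hv : 0 < W.deg H v)
    (hw : 0 < W.deg H w) : (W.sgraph H).Reachable v w := by
  obtain ⟨-, -, l, ⟨hchain, -⟩, hcount⟩ := hH
  have hstep : ∀ s ∈ l, (W.sgraph H).Adj (W.stepSrc s) (W.stepDst s) := by
    rintro ⟨e, b⟩ hs
    have he : 0 < H e := hcount e ▸ List.count_pos_iff.2 (List.mem_map_of_mem hs)
    cases b
    exacts [(sgraph_adj_of_pos he).symm, sgraph_adj_of_pos he]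
  have hend : ∀ u, 0 < W.deg H u → ∃ s ∈ l, W.stepSrc s = u ∨ W.stepDst s = u := by
    intro u hu
    obtain ⟨e, he, hends⟩ := deg_pos_iff.1 hu
    obtain ⟨⟨e, b⟩, hs, rfl⟩ :=
      List.mem_map.1 (List.count_pos_iff.1 ((hcount e).symm ▸ he))
    refine ⟨_, hs, ?_⟩
    cases b <;> simp only [stepSrc, stepDst] <;> tauto
  cases l with
  | nil => simpa using hend v hv
  | cons a t =>
    have hroot : ∀ s ∈ a :: t, (W.sgraph H).Reachable (W.stepSrc a) (W.stepSrc s) := by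
      refine (List.IsChain.iff_mem.1 hchain).induction _ _ ?_ fun _ => .refl _
      rintro x y ⟨hx, -, hxy⟩ h
      exact hxy ▸ h.trans (hstep x hx).reachable
    have hreach : ∀ u, 0 < W.deg H u → (W.sgraph H).Reachable (W.stepSrc a) u := by
      intro u hu
      obtain ⟨s, hs, rfl | rfl⟩ := hend u hu
      exacts [hroot s hs, (hroot s hs).trans (hstep s hs).reachable]
    exact (hreach v hv).symm.trans (hreach w hw)

end Tour

section Components

lemma reachable_induce (hv : 0 < W.deg T v) (h : (W.sgraph T).Reachable v w) :
    ((W.sgraph T).induce {u | 0 < W.deg T u}).Reachable ⟨v, hv⟩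
      ⟨w, deg_pos_of_reachable hv h⟩ := by
  obtain ⟨p⟩ := h
  induction p with
  | nil => rfl
  | cons hadj _ ih =>
    exact (show ((W.sgraph T).induce _).Adj ⟨_, hv⟩ ⟨_, deg_pos_of_adj hadj.symm⟩ from
      hadj).reachable.trans (ih _)

lemma numComp_eq_zero_iff : W.numComp T = 0 ↔ ∀ v, W.deg T v = 0 := by
  rw [numComp, Finite.card_eq_zero_iff]
  refine ⟨fun h v => Nat.eq_zero_of_not_pos fun hv => h.false
    (SimpleGraph.connectedComponentMk _ ⟨v, hv⟩), fun h => ⟨fun c => ?_⟩⟩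
  obtain ⟨⟨v, hv⟩, -⟩ := c.exists_rep
  exact (h v ▸ hv : 0 < 0).false

lemma numComp_le_card (S : Finset W.V)
    (h : ∀ v, 0 < W.deg T v → ∃ s ∈ S, (W.sgraph T).Reachable v s) :
    W.numComp T ≤ S.card := by
  let f : S.filter (0 < W.deg T ·) →
      ((W.sgraph T).induce {v | 0 < W.deg T v}).ConnectedComponent :=
    fun s => SimpleGraph.connectedComponentMk _ ⟨s, (Finset.mem_filter.1 s.2).2⟩
  have hf : Function.Surjective f := by
    refine SimpleGraph.ConnectedComponent.ind fun ⟨v, hv⟩ => ?_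
    obtain ⟨s, hs, hvs⟩ := h v hv
    exact ⟨⟨s, Finset.mem_filter.2 ⟨hs, deg_pos_of_reachable hv hvs⟩⟩,
      SimpleGraph.ConnectedComponent.sound (reachable_induce hv hvs).symm⟩
  calc W.numComp T ≤ Nat.card (S.filter (0 < W.deg T ·)) :=
        Nat.card_le_card_of_surjective f hf
    _ ≤ S.card := by rw [Nat.card_eq_finsetCard]; exact Finset.card_filter_le _ _

end Components

def MeetOnlyAt (T C : W.E → ℕ) (a b : W.V) : Prop :=
  ∀ w, w ≠ a → w ≠ b → W.deg T w = 0 ∨ W.deg C w = 0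

section Interface

variable {a b : W.V}

lemma MeetOnlyAt.even_deg (hH : W.IsTour (T + C)) (hint : W.MeetOnlyAt T C a b) (ha : w ≠ a)
    (hb : w ≠ b) : Even (W.deg T w) := by
  rcases hint w ha hb with h | h
  · simp [h]
  · simpa [deg_add, h] using hH.even_deg w

lemma MeetOnlyAt.even_deg_add_deg (hH : W.IsTour (T + C)) (hint : W.MeetOnlyAt T C a b) :
    Even (W.deg T a + W.deg T b) := by
  rcases eq_or_ne a b with rfl | hab
  · exact ⟨_, rfl⟩
  have hall := even_sum_deg_of_closed (T := T) Finset.univ (by simp)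
  rw [← Finset.sum_sdiff (Finset.subset_univ {a, b}), Finset.sum_pair hab] at hall
  refine (Nat.even_add.1 hall).1 (Finset.even_sum _ fun w hw => ?_)
  simp only [Finset.mem_sdiff, Finset.mem_insert, Finset.mem_singleton, not_or] at hw
  exact hint.even_deg hH hw.2.1 hw.2.2

lemma MeetOnlyAt.reachable_of_odd (hH : W.IsTour (T + C)) (hint : W.MeetOnlyAt T C a b)
    (hodd : Odd (W.deg T a)) : (W.sgraph T).Reachable a b := by
  classical
  by_contra hab
  let S := Finset.univ.filter ((W.sgraph T).Reachable a)
  have hclosed : ∀ e, 0 < T e → ((W.ends e).1 ∈ S ↔ (W.ends e).2 ∈ S) := fun e he => by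
    have hadj := sgraph_adj_of_pos he
    simp only [S, Finset.mem_filter, Finset.mem_univ, true_and]
    exact ⟨fun h => h.trans hadj.reachable, fun h => h.trans hadj.symm.reachable⟩
  have hS := even_sum_deg_of_closed S hclosed
  rw [← Finset.add_sum_erase S _ (show a ∈ S by simp [S])] at hS
  refine Nat.not_even_iff_odd.2 hodd ((Nat.even_add.1 hS).2 (Finset.even_sum _ fun w hw => ?_))
  obtain ⟨hwa, hwS⟩ := Finset.mem_erase.1 hw
  refine hint.even_deg hH hwa ?_
  rintro rfl
  exact hab (by simpa [S] using hwS)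

lemma MeetOnlyAt.deg_eq_zero_of_reachable (hint : W.MeetOnlyAt T C a b) (hv : 0 < W.deg T v)
    (hva : ¬ (W.sgraph T).Reachable v a) (hvb : ¬ (W.sgraph T).Reachable v b)
    (hw : (W.sgraph T).Reachable v w) : W.deg C w = 0 :=
  (hint w (fun h => hva (h ▸ hw)) (fun h => hvb (h ▸ hw))).resolve_left
    (deg_pos_of_reachable hv hw).ne'

lemma MeetOnlyAt.reachable_of_reachable_add (hint : W.MeetOnlyAt T C a b)
    (hv : 0 < W.deg T v) (hva : ¬ (W.sgraph T).Reachable v a)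
    (hvb : ¬ (W.sgraph T).Reachable v b) (hw : (W.sgraph (T + C)).Reachable v w) :
    (W.sgraph T).Reachable v w := by
  rw [SimpleGraph.reachable_iff_reflTransGen] at hw
  induction hw with
  | refl => rfl
  | tail _ hxy ih =>
    obtain ⟨hne, e, he, hends⟩ := hxy
    refine ih.trans (SimpleGraph.Adj.reachable
      ⟨hne, e, Nat.pos_of_ne_zero fun hTe => ?_, hends⟩)
    have hCe : 0 < C e := by simpa [hTe] using he
    exact (deg_pos_iff.2 ⟨e, hCe, by tauto⟩).ne' (hint.deg_eq_zero_of_reachable hv hva hvb ih)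

/-- A component of `T` avoiding `a` and `b` cannot meet `C`; as the support of the tour is
connected, `C` has no edges at all. -/
lemma MeetOnlyAt.eq_zero (hH : W.IsTour (T + C)) (hint : W.MeetOnlyAt T C a b)
    (hv : 0 < W.deg T v) (hva : ¬ (W.sgraph T).Reachable v a)
    (hvb : ¬ (W.sgraph T).Reachable v b) : C = 0 := by
  funext e
  by_contra hCe
  replace hCe : 0 < C e := Nat.pos_of_ne_zero hCe
  have hHe : 0 < W.deg (T + C) (W.ends e).1 :=
    deg_pos_iff.2 ⟨e, by simp only [Pi.add_apply]; omega, Or.inl rfl⟩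
  have hvH : 0 < W.deg (T + C) v := by rw [deg_add]; omega
  have hreach := hint.reachable_of_reachable_add hv hva hvb (hH.reachable hvH hHe)
  exact (deg_pos_iff.2 ⟨e, hCe, Or.inl rfl⟩).ne'
    (hint.deg_eq_zero_of_reachable hv hva hvb hreach)

end Interface

section Aisles

variable {j : Fin W.n} {e : W.E}

lemma aisle_le_of_mem_edgesUpTo (he : e ∈ W.edgesUpTo (j.val + 1) j.val)
    (hv : (W.ends e).1 = v ∨ (W.ends e).2 = v) : v.1 ≤ j := by
  rcases e with ⟨i, x⟩ | (k | k) <;> rcases hv with rfl | rfl <;>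
    simp only [edgesUpTo, Membership.mem, Set.Mem] at he <;>
    simp only [ends, aV, bV, leftAisle, rightAisle, Fin.le_def] <;> omega

lemma mem_edgesUpTo_of_aisle_le (hv : (W.ends e).1 = v ∨ (W.ends e).2 = v) (hvj : v.1 ≤ j)
    (ha : v ≠ W.aV j) (hb : v ≠ W.bV j) : e ∈ W.edgesUpTo (j.val + 1) j.val := by
  rcases e with ⟨i, x⟩ | (k | k) <;> rcases hv with rfl | rfl
  · exact Nat.lt_succ_of_le hvj
  · exact Nat.lt_succ_of_le hvj
  · exact lt_of_le_of_ne hvj fun hkj => ha (congrArg W.aV hkj)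
  · exact Nat.lt_of_succ_le hvj
  · exact lt_of_le_of_ne hvj fun hkj => hb (congrArg W.bV hkj)
  · exact Nat.lt_of_succ_le hvj

lemma deg_eq_zero_of_lt_aisle (hT : ∀ e ∉ W.edgesUpTo (j.val + 1) j.val, T e = 0)
    (hv : j < v.1) : W.deg T v = 0 := by
  by_contra h
  obtain ⟨e, he, hends⟩ := deg_pos_iff.1 (Nat.pos_of_ne_zero h)
  have hL : e ∈ W.edgesUpTo (j.val + 1) j.val := by_contra fun hL => he.ne' (hT e hL)
  exact (aisle_le_of_mem_edgesUpTo hL hends).not_gt hv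

lemma deg_eq_zero_of_aisle_le (hC : ∀ e ∈ W.edgesUpTo (j.val + 1) j.val, C e = 0)
    (hv : v.1 ≤ j) (ha : v ≠ W.aV j) (hb : v ≠ W.bV j) : W.deg C v = 0 := by
  by_contra h
  obtain ⟨e, he, hends⟩ := deg_pos_iff.1 (Nat.pos_of_ne_zero h)
  exact he.ne' (hC e (mem_edgesUpTo_of_aisle_le hends hv ha hb))

lemma meetOnlyAt_of_supports (hT : ∀ e ∉ W.edgesUpTo (j.val + 1) j.val, T e = 0)
    (hC : ∀ e ∈ W.edgesUpTo (j.val + 1) j.val, C e = 0) :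
    W.MeetOnlyAt T C (W.aV j) (W.bV j) := fun _ ha hb =>
  (lt_or_ge j _).imp (deg_eq_zero_of_lt_aisle hT) fun h => deg_eq_zero_of_aisle_le hC h ha hb

lemma IsPick.ne_aV (hv : W.IsPick v) : v ≠ W.aV j := by
  rintro rfl
  simp [IsPick, aV] at hv

lemma IsPick.ne_bV (hv : W.IsPick v) : v ≠ W.bV j := by
  rintro rfl
  simp [IsPick, bV] at hv

lemma IsPick.aisle_gt (hH : W.IsTour (T + C))
    (hC : ∀ e ∈ W.edgesUpTo (j.val + 1) j.val, C e = 0) (hT : ∀ w, W.deg T w = 0)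
    (hv : W.IsPick v) : j < v.1 := by
  by_contra hvj
  have hreq := hH.2.1 v (Or.inl hv)
  rw [deg_add, hT, deg_eq_zero_of_aisle_le hC (not_lt.1 hvj) hv.ne_aV hv.ne_bV] at hreq
  exact hreq.false

lemma IsPick.aisle_le (hH : W.IsTour T) (hT : ∀ e ∉ W.edgesUpTo (j.val + 1) j.val, T e = 0)
    (hv : W.IsPick v) : v.1 ≤ j :=
  not_lt.1 fun hvj => (hH.2.1 v (Or.inl hv)).ne' (deg_eq_zero_of_lt_aisle hT hvj)

end Aisles

section Classes

lemma degClass_eq_zero_iff {d : ℕ} : degClass d = .zero ↔ d = 0 := by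
  unfold degClass
  split_ifs <;> simp_all

lemma degClass_mem_classes {da db k : ℕ} (hpar : Even (da + db)) (hk2 : k ≤ 2)
    (hk1 : da = 0 ∨ db = 0 ∨ Odd da → k ≤ 1) (hk0 : k = 0 ↔ da = 0 ∧ db = 0) :
    (degClass da, degClass db, k) ∈
      ({cUU1C, c0E1C, cE01C, cEE1C, cEE2C, c000C, c001C} : Set (DegClass × DegClass × ℕ)) := by
  simp only [Nat.even_iff, Nat.odd_iff] at hpar hk1
  simp only [degClass, cUU1C, c0E1C, cE01C, cEE1C, cEE2C, c000C, c001C, Set.mem_insert_iff,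
    Set.mem_singleton_iff]
  split_ifs <;> simp <;> omega

variable {j : Fin W.n}

lemma classOf_mem_of_reachable (hH : W.IsTour (T + C))
    (hint : W.MeetOnlyAt T C (W.aV j) (W.bV j))
    (hcov : ∀ v, 0 < W.deg T v →
      (W.sgraph T).Reachable v (W.aV j) ∨ (W.sgraph T).Reachable v (W.bV j)) :
    W.classOf T j ∈
      ({cUU1C, c0E1C, cE01C, cEE1C, cEE2C, c000C, c001C} : Set (DegClass × DegClass × ℕ)) := by
  have hzero : ∀ x, W.deg T x = 0 → ∀ v, 0 < W.deg T v → ¬ (W.sgraph T).Reachable v x :=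
    fun x hx v hv h => (deg_pos_of_reachable hv h).ne' hx
  refine degClass_mem_classes (hint.even_deg_add_deg hH) ?_ ?_ ?_
  · refine (numComp_le_card {W.aV j, W.bV j} fun v hv => ?_).trans Finset.card_le_two
    rcases hcov v hv with h | h
    exacts [⟨_, by simp, h⟩, ⟨_, by simp, h⟩]
  · rintro (ha | hb | hodd)
    · exact numComp_le_card {W.bV j} fun v hv =>
        ⟨_, Finset.mem_singleton_self _, (hcov v hv).resolve_left (hzero _ ha v hv)⟩
    · exact numComp_le_card {W.aV j} fun v hv =>
        ⟨_, Finset.mem_singleton_self _, (hcov v hv).resolve_right (hzero _ hb v hv)⟩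
    · refine numComp_le_card {W.aV j} fun v hv => ⟨_, Finset.mem_singleton_self _, ?_⟩
      exact (hcov v hv).elim id fun h => h.trans (hint.reachable_of_odd hH hodd).symm
  · refine numComp_eq_zero_iff.trans ⟨fun h => ⟨h _, h _⟩, fun ⟨ha, hb⟩ v => ?_⟩
    by_contra hv
    replace hv := Nat.pos_of_ne_zero hv
    exact (hcov v hv).elim (hzero _ ha v hv) (hzero _ hb v hv)

lemma classOf_eq_c001C (hH : W.IsTour T) (hv : 0 < W.deg T v)
    (hva : ¬ (W.sgraph T).Reachable v (W.aV j)) (hvb : ¬ (W.sgraph T).Reachable v (W.bV j)) :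
    W.classOf T j = c001C := by
  have hzero : ∀ x, ¬ (W.sgraph T).Reachable v x → W.deg T x = 0 := fun x hx =>
    Nat.eq_zero_of_not_pos fun h => hx (hH.reachable hv h)
  have hk : W.numComp T = 1 := by
    refine le_antisymm ?_ (Nat.pos_of_ne_zero fun h => hv.ne' (numComp_eq_zero_iff.1 h v))
    exact numComp_le_card {v} fun w hw => ⟨v, Finset.mem_singleton_self v, hH.reachable hw hv⟩
  rw [classOf, hzero _ hva, hzero _ hvb, hk]
  rfl

lemma exists_isolated_of_classOf_eq_c001C (h : W.classOf T j = c001C) :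
    ∃ v, 0 < W.deg T v ∧ ¬ (W.sgraph T).Reachable v (W.aV j) ∧
      ¬ (W.sgraph T).Reachable v (W.bV j) := by
  simp only [classOf, c001C, Prod.mk.injEq, degClass_eq_zero_iff] at h
  obtain ⟨ha, hb, hk⟩ := h
  obtain ⟨v, hv⟩ : ∃ v, W.deg T v ≠ 0 := by
    by_contra! hT
    simp [numComp_eq_zero_iff.2 hT] at hk
  replace hv := Nat.pos_of_ne_zero hv
  exact ⟨v, hv, fun h => (deg_pos_of_reachable hv h).ne' ha,
    fun h => (deg_pos_of_reachable hv h).ne' hb⟩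

end Classes

end Warehouse

open Warehouse in
/-- every `L_j` PTS belongs to one of the seven equivalence classes;
class `000C` occurs only if no pick vertex lies in `L_j`, and class `001C` occurs only
if no pick vertex lies in `G − L_j`. -/
theorem stmt2 (W : Warehouse) (j : Fin W.n)
    (T : W.E → ℕ) (hT : W.IsPTS (W.edgesUpTo (j.val + 1) j.val) T) :
    W.classOf T j ∈
      ({cUU1C, c0E1C, cE01C, cEE1C, cEE2C, c000C, c001C} : Set (DegClass × DegClass × ℕ)) ∧
    (W.classOf T j = c000C → ∀ v : W.V, W.IsPick v → j < v.1) ∧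
    (W.classOf T j = c001C → ∀ v : W.V, W.IsPick v → v.1 ≤ j) := by
  obtain ⟨-, hTL, C, -, hCL, hH⟩ := hT
  change W.IsTour (T + C) at hH
  have hint := meetOnlyAt_of_supports hTL hCL
  have htour : ∀ v, 0 < W.deg T v → ¬ (W.sgraph T).Reachable v (W.aV j) →
      ¬ (W.sgraph T).Reachable v (W.bV j) → W.IsTour T := fun v hv hva hvb => by
    simpa [hint.eq_zero hH hv hva hvb] using hH
  refine ⟨?_, fun h000 v hv => ?_, fun h001 v hv => ?_⟩
  · by_cases hcov : ∀ v, 0 < W.deg T v →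
        (W.sgraph T).Reachable v (W.aV j) ∨ (W.sgraph T).Reachable v (W.bV j)
    · exact classOf_mem_of_reachable hH hint hcov
    · push Not at hcov
      obtain ⟨v, hv, hva, hvb⟩ := hcov
      simp [classOf_eq_c001C (htour v hv hva hvb) hv hva hvb]
  · exact hv.aisle_gt hH hCL (numComp_eq_zero_iff.1 (congrArg (·.2.2) h000))
  · obtain ⟨u, hu, hua, hub⟩ := exists_isolated_of_classOf_eq_c001C h001
    exact hv.aisle_le (htour u hu hua hub) hTL
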